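/- Let k ≥ 1, M = 2^{k+1} - 1, and let a be an integer with M < a < M(M+1) and 4 | M(M+1) - a. Suppose de = (M(M+1) - a)/4 with d < e positive integers, and that p = M + 2d and q = M + 2e are both prime. If pq ≠ r + s·p + t·q for all positive integers r, s, t ≤ M, then n = 2^k·p·q is weird. -/

import Mathlib

/-- Sum of the positive divisors of `n`. -/
def sigma' (n : ℕ) : ℕ := ∑ d ∈ n.divisors, d

/-- `n` is abundant if `σ(n) > 2n`. -/
def Abundant (n : ℕ) : Prop := 2 * n < sigma' n

/-- `n` is pseudoperfect (in the weak sense) if some subset of its proper divisors sums to `n`. -/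
def Pseudoperfect (n : ℕ) : Prop := ∃ s ⊆ n.properDivisors, ∑ d ∈ s, d = n

/-- `n` is weird if it is abundant and no subset of its proper divisors sums to `n`. -/
def Weird (n : ℕ) : Prop := Abundant n ∧ ¬ Pseudoperfect n

lemma sigma'_mul {m n : ℕ} (h : m.Coprime n) : sigma' (m * n) = sigma' m * sigma' n := by
  unfold sigma'
  rw [Nat.Coprime.sum_divisors_mul h]

lemma sigma'_prime {p : ℕ} (hp : p.Prime) : sigma' p = p + 1 := by
  unfold sigma'
  rw [hp.divisors, Finset.sum_insert (by simp; exact hp.one_lt.ne), Finset.sum_singleton]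
  omega

lemma sigma'_two_pow (k : ℕ) : sigma' (2 ^ k) = 2 ^ (k + 1) - 1 := by
  unfold sigma'
  rw [Nat.divisors_prime_pow Nat.prime_two, Finset.sum_map]
  simp only [Function.Embedding.coeFn_mk]
  induction (k + 1) with
  | zero => simp
  | succ n ih =>
    rw [Finset.sum_range_succ, ih]
    have : 1 ≤ (2 : ℕ) ^ n := Nat.one_le_two_pow
    omega

set_option maxHeartbeats 1000000 in
theorem weird_of_factorization (k : ℕ) (hk : 1 ≤ k) (a : ℤ)
    (haM : ((2 : ℤ) ^ (k + 1) - 1) < a)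
    (haM2 : a < ((2 : ℤ) ^ (k + 1) - 1) * (((2 : ℤ) ^ (k + 1) - 1) + 1))
    (d e : ℕ) (hd : 0 < d) (hde : d < e)
    (hfac : (4 : ℤ) * (d * e) = ((2 : ℤ) ^ (k + 1) - 1) * (((2 : ℤ) ^ (k + 1) - 1) + 1) - a)
    (p q : ℕ) (hpdef : p = 2 ^ (k + 1) - 1 + 2 * d) (hqdef : q = 2 ^ (k + 1) - 1 + 2 * e)
    (hp : p.Prime) (hq : q.Prime)
    (hrep : ∀ r s t : ℕ, 0 < r → r ≤ 2 ^ (k + 1) - 1 → 0 < s → s ≤ 2 ^ (k + 1) - 1 →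
      0 < t → t ≤ 2 ^ (k + 1) - 1 → p * q ≠ r + s * p + t * q) :
    Weird (2 ^ k * p * q) := by
  set M : ℕ := 2 ^ (k + 1) - 1 with hM
  have h2k1 : (4 : ℕ) ≤ 2 ^ (k + 1) := by
    calc (4:ℕ) = 2 ^ 2 := rfl
    _ ≤ 2 ^ (k+1) := Nat.pow_le_pow_right (by norm_num) (by omega)
  have hM3 : 3 ≤ M := by omega
  have hMcast : (M : ℤ) = (2 : ℤ) ^ (k + 1) - 1 := by
    have : ((2 ^ (k+1) : ℕ) : ℤ) = (2:ℤ) ^ (k+1) := by push_cast; ring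
    omega
  have hpM : M + 2 ≤ p := by omega
  have hqM : M + 4 ≤ q := by omega
  have hpq : p ≠ q := by omega
  have hpZ : (p : ℤ) = (M : ℤ) + 2 * d := by exact_mod_cast hpdef
  have hqZ : (q : ℤ) = (M : ℤ) + 2 * e := by exact_mod_cast hqdef
  have hdZ : (1 : ℤ) ≤ (d : ℤ) := by exact_mod_cast hd
  have heZ : (d : ℤ) + 1 ≤ (e : ℤ) := by exact_mod_cast hde
  have hMZ3 : (3 : ℤ) ≤ (M : ℤ) := by exact_mod_cast hM3
  rw [← hMcast] at haM haM2 hfac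
  -- coprimality facts
  have hp2 : p ≠ 2 := by omega
  have hq2 : q ≠ 2 := by omega
  have cop2p : (2 ^ k).Coprime p :=
    Nat.Coprime.pow_left _ ((Nat.coprime_primes Nat.prime_two hp).mpr (Ne.symm hp2))
  have cop2q : (2 ^ k).Coprime q :=
    Nat.Coprime.pow_left _ ((Nat.coprime_primes Nat.prime_two hq).mpr (Ne.symm hq2))
  have coppq : p.Coprime q := (Nat.coprime_primes hp hq).mpr hpq
  -- sigma computation
  have hσ : sigma' (2 ^ k * p * q) = M * ((p + 1) * (q + 1)) := by
    rw [mul_assoc, sigma'_mul (Nat.Coprime.mul_right cop2p cop2q),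
      sigma'_mul coppq, sigma'_two_pow, sigma'_prime hp, sigma'_prime hq, ← hM]
  -- key integer identity : σ - 2n = a
  have hid : (M : ℤ) * ((p + 1) * (q + 1)) - ((M : ℤ) + 1) * (p * q) = a := by
    rw [hpZ, hqZ]; linear_combination -hfac
  have habZ : (2 : ℤ) * (2 ^ k * p * q) = ((M : ℤ) + 1) * (p * q) := by
    have : ((M : ℤ) + 1) = 2 ^ (k + 1) := by omega
    rw [this]; ring
  have hab : Abundant (2 ^ k * p * q) := by
    unfold Abundant
    have h1 : (2 : ℤ) * (2 ^ k * p * q) < (sigma' (2 ^ k * p * q) : ℤ) := by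
      rw [habZ, hσ]; push_cast; omega
    exact_mod_cast h1
  have hn0 : 0 < (2 : ℕ) ^ k * p * q :=
    Nat.mul_pos (Nat.mul_pos (Nat.pow_pos (n := k) (by norm_num)) hp.pos) hq.pos
  refine ⟨hab, ?_⟩
  rintro ⟨S, hS, hsum⟩
  set n : ℕ := 2 ^ k * p * q with hn
  set T : Finset ℕ := n.properDivisors \ S with hT
  have hsd : ∑ m ∈ T, m + ∑ m ∈ S, m = ∑ m ∈ n.properDivisors, m :=
    Finset.sum_sdiff hS
  have hps : ∑ m ∈ n.properDivisors, m + n = sigma' n :=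
    (Nat.sum_divisors_eq_sum_properDivisors_add_self).symm
  set A : ℕ := ∑ m ∈ T, m with hA
  have hAσ : A + 2 * n = sigma' n := by omega
  have hAa : (A : ℤ) = a := by
    have h1 : (A : ℤ) + 2 * n = (sigma' n : ℤ) := by exact_mod_cast hAσ
    have h2 : (sigma' n : ℤ) = (M : ℤ) * ((p + 1) * (q + 1)) := by
      rw [hσ]; push_cast; ring
    have h3 : 2 * ((n : ℕ) : ℤ) = ((M : ℤ) + 1) * ((p : ℤ) * q) := by
      rw [hn]; push_cast; linarith [habZ]
    linarith [hid]
  -- every element of T is a nonzero divisor of n, at most A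
  have hTmem : ∀ m ∈ T, m ∣ n ∧ m ≠ 0 ∧ m ≤ A := by
    intro m hm
    have h1 : m ∈ n.properDivisors := (Finset.mem_sdiff.mp hm).1
    have h2 := Nat.mem_properDivisors.mp h1
    refine ⟨h2.1, ?_, Finset.single_le_sum (f := id) (by intro i _; exact Nat.zero_le i) hm⟩
    rintro rfl
    have := zero_dvd_iff.mp h2.1
    omega
  have hpqA : (A : ℤ) < (p : ℤ) * q := by
    rw [hAa, hpZ, hqZ]
    nlinarith [haM2]
  -- no element of T is divisible by both p and q
  have hnotboth : ∀ m ∈ T, ¬(p ∣ m ∧ q ∣ m) := by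
    rintro m hm ⟨h1, h2⟩
    obtain ⟨hdvd, hm0, hmA⟩ := hTmem m hm
    have : p * q ∣ m := Nat.Coprime.mul_dvd_of_dvd_of_dvd coppq h1 h2
    have : p * q ≤ m := Nat.le_of_dvd (Nat.pos_of_ne_zero hm0) this
    have : (p : ℤ) * q ≤ (m : ℤ) := by exact_mod_cast this
    have : (m : ℤ) ≤ (A : ℤ) := by exact_mod_cast hmA
    linarith
  -- partition T
  set T1 : Finset ℕ := T.filter (fun m => p ∣ m) with hT1
  set Trest : Finset ℕ := T.filter (fun m => ¬ p ∣ m) with hTrest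
  set T2 : Finset ℕ := Trest.filter (fun m => q ∣ m) with hT2
  set T0 : Finset ℕ := Trest.filter (fun m => ¬ q ∣ m) with hT0
  have hsplit1 : ∑ m ∈ T1, m + ∑ m ∈ Trest, m = A :=
    Finset.sum_filter_add_sum_filter_not T _ _
  have hsplit2 : ∑ m ∈ T2, m + ∑ m ∈ T0, m = ∑ m ∈ Trest, m :=
    Finset.sum_filter_add_sum_filter_not Trest _ _
  -- T0 ⊆ divisors of 2^k
  have hT0sub : T0 ⊆ (2 ^ k).divisors := by
    intro m hm
    have hmr := Finset.mem_filter.mp hm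
    have hmq : ¬ q ∣ m := hmr.2
    have hmr2 := Finset.mem_filter.mp hmr.1
    have hmp : ¬ p ∣ m := hmr2.2
    obtain ⟨hdvd, hm0, -⟩ := hTmem m hmr2.1
    have copmp : m.Coprime p := (hp.coprime_iff_not_dvd.mpr hmp).symm
    have copmq : m.Coprime q := (hq.coprime_iff_not_dvd.mpr hmq).symm
    have : m ∣ 2 ^ k * (p * q) := by rwa [← mul_assoc]
    have : m ∣ 2 ^ k := (Nat.Coprime.dvd_of_dvd_mul_right (Nat.Coprime.mul_right copmp copmq)) this
    exact Nat.mem_divisors.mpr ⟨this, by positivity⟩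
  -- elements of T1 divided by p land in divisors of 2^k
  have hT1div : ∀ m ∈ T1, p ∣ m ∧ m / p ∣ 2 ^ k := by
    intro m hm
    have hmr := Finset.mem_filter.mp hm
    have hmp : p ∣ m := hmr.2
    obtain ⟨hdvd, hm0, -⟩ := hTmem m hmr.1
    have hmq : ¬ q ∣ m := fun h => hnotboth m hmr.1 ⟨hmp, h⟩
    obtain ⟨u, hu⟩ := hmp
    have hup : m / p = u := by rw [hu]; exact Nat.mul_div_cancel_left u hp.pos
    refine ⟨⟨u, hu⟩, ?_⟩
    rw [hup]
    have h1 : p * u ∣ p * (2 ^ k * q) := by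
      rw [← hu]; convert hdvd using 1; rw [hn]; ring
    have h2 : u ∣ 2 ^ k * q := (mul_dvd_mul_iff_left hp.pos.ne').mp h1
    have hqu : ¬ q ∣ u := fun h => hmq (hu ▸ Dvd.dvd.mul_left h p)
    have copuq : u.Coprime q := (hq.coprime_iff_not_dvd.mpr hqu).symm
    exact Nat.Coprime.dvd_of_dvd_mul_right copuq h2
  have hT2div : ∀ m ∈ T2, q ∣ m ∧ m / q ∣ 2 ^ k := by
    intro m hm
    have hmr := Finset.mem_filter.mp hm
    have hmq : q ∣ m := hmr.2
    have hmr2 := Finset.mem_filter.mp hmr.1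
    have hmp : ¬ p ∣ m := hmr2.2
    obtain ⟨hdvd, hm0, -⟩ := hTmem m hmr2.1
    obtain ⟨u, hu⟩ := hmq
    have hup : m / q = u := by rw [hu]; exact Nat.mul_div_cancel_left u hq.pos
    refine ⟨⟨u, hu⟩, ?_⟩
    rw [hup]
    have h1 : q * u ∣ q * (2 ^ k * p) := by
      rw [← hu]; convert hdvd using 1; rw [hn]; ring
    have h2 : u ∣ 2 ^ k * p := (mul_dvd_mul_iff_left hq.pos.ne').mp h1
    have hpu : ¬ p ∣ u := fun h => hmp (hu ▸ Dvd.dvd.mul_left h q)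
    have coppu : u.Coprime p := (hp.coprime_iff_not_dvd.mpr hpu).symm
    exact Nat.Coprime.dvd_of_dvd_mul_right coppu h2
  have hMtot : ∑ m ∈ (2 ^ k).divisors, m = M := sigma'_two_pow k
  have quot_le : ∀ (P : Finset ℕ) (c : ℕ), 0 < c → (∀ m ∈ P, c ∣ m ∧ m / c ∣ 2 ^ k) →
      ∑ m ∈ P, m / c ≤ M ∧ ∑ m ∈ P, m = c * ∑ m ∈ P, m / c := by
    intro P c hc hP
    constructor
    · have hinj : ∀ x ∈ P, ∀ y ∈ P, x / c = y / c → x = y := by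
        intro x hx y hy hxy
        obtain ⟨hx1, -⟩ := hP x hx
        obtain ⟨hy1, -⟩ := hP y hy
        calc x = c * (x / c) := (Nat.mul_div_cancel' hx1).symm
          _ = c * (y / c) := by rw [hxy]
          _ = y := Nat.mul_div_cancel' hy1
      have him : P.image (· / c) ⊆ (2 ^ k).divisors := by
        intro u hu
        obtain ⟨m, hm, rfl⟩ := Finset.mem_image.mp hu
        exact Nat.mem_divisors.mpr ⟨(hP m hm).2, by positivity⟩
      calc ∑ m ∈ P, m / c = ∑ u ∈ P.image (· / c), u := by rw [Finset.sum_image hinj]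
        _ ≤ ∑ m ∈ (2 ^ k).divisors, m := Finset.sum_le_sum_of_subset him
        _ = M := hMtot
    · rw [Finset.mul_sum]
      refine Finset.sum_congr rfl fun m hm => ?_
      exact (Nat.mul_div_cancel' (hP m hm).1).symm
  obtain ⟨hsM, hT1eq⟩ := quot_le T1 p hp.pos hT1div
  obtain ⟨htM, hT2eq⟩ := quot_le T2 q hq.pos hT2div
  set r : ℕ := ∑ m ∈ T0, m with hr
  set s : ℕ := ∑ m ∈ T1, m / p with hs
  set t : ℕ := ∑ m ∈ T2, m / q with ht
  have hrM : r ≤ M := by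
    rw [hr, ← hMtot]
    exact Finset.sum_le_sum_of_subset hT0sub
  have hAeq : A = r + s * p + t * q := by
    have h0 : A = (∑ m ∈ T1, m) + ((∑ m ∈ T2, m) + r) := by rw [← hsplit1, ← hsplit2]
    rw [h0, hT1eq, hT2eq]
    ring
  -- cast to ℤ and derive the representation of pq
  set r' : ℕ := M - r with hr'
  set s' : ℕ := M - s with hs'
  set t' : ℕ := M - t with ht'
  have hkey : p * q = r' + s' * p + t' * q := by
    have hZ : (p : ℤ) * q = (r' : ℤ) + (s' : ℤ) * p + (t' : ℤ) * q := by
      have h1 : (r' : ℤ) = (M : ℤ) - r := by rw [hr']; exact Nat.cast_sub hrM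
      have h2 : (s' : ℤ) = (M : ℤ) - s := by rw [hs']; exact Nat.cast_sub hsM
      have h3 : (t' : ℤ) = (M : ℤ) - t := by rw [ht']; exact Nat.cast_sub htM
      have h5 : a = (M : ℤ) * ((p : ℤ) + q + 1) - p * q := by
        rw [← hid]; ring
      have h6 : a = (r : ℤ) + (s : ℤ) * p + (t : ℤ) * q := by
        rw [← hAa]; exact_mod_cast hAeq
      rw [h1, h2, h3]
      linear_combination h5 - h6
    exact_mod_cast hZ
  have hr'M : r' ≤ M := Nat.sub_le _ _
  have hs'M : s' ≤ M := Nat.sub_le _ _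
  have ht'M : t' ≤ M := Nat.sub_le _ _
  -- case analysis
  have hpndq : ¬ p ∣ q := fun h => hpq ((Nat.prime_dvd_prime_iff_eq hp hq).mp h)
  have hqndp : ¬ q ∣ p := fun h => (Ne.symm hpq) ((Nat.prime_dvd_prime_iff_eq hq hp).mp h)
  rcases Nat.eq_zero_or_pos r' with hr0 | hr0
  · -- r' = 0 : pq = s'p + t'q, p ∣ t'q ⇒ p ∣ t' ⇒ t' = 0 ⇒ q = s' ≤ M < q
    rw [hr0] at hkey
    simp only [Nat.zero_add] at hkey
    have hdvd : p ∣ t' * q := by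
      have h1 : p ∣ p * q := dvd_mul_right p q
      have h2 : p ∣ s' * p := dvd_mul_left p s'
      have h3 : t' * q = p * q - s' * p := by omega
      rw [h3]; exact Nat.dvd_sub h1 h2
    have hpt' : p ∣ t' := by
      rcases (Nat.Prime.dvd_mul hp).mp hdvd with h | h
      · exact h
      · exact absurd h hpndq
    have ht'0 : t' = 0 := by
      rcases Nat.eq_zero_or_pos t' with h | h
      · exact h
      · exact absurd (Nat.le_of_dvd h hpt') (by omega)
    rw [ht'0] at hkey
    simp only [Nat.zero_mul, Nat.add_zero] at hkey
    have hqs : q = s' := by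
      have hc : s' * p = p * s' := Nat.mul_comm _ _
      have hq' : p * q = p * s' := by omega
      exact (Nat.eq_of_mul_eq_mul_left hp.pos hq')
    omega
  rcases Nat.eq_zero_or_pos s' with hs0 | hs0
  · -- s' = 0 : pq = r' + t'q ⇒ q ∣ r' ⇒ q ≤ r' ≤ M < q
    rw [hs0] at hkey
    simp only [Nat.zero_mul, Nat.add_zero, Nat.zero_add] at hkey
    have hdvd : q ∣ r' := by
      have h1 : q ∣ p * q := dvd_mul_left q p
      have h2 : q ∣ t' * q := dvd_mul_left q t'
      have h3 : r' = p * q - t' * q := by omega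
      rw [h3]; exact Nat.dvd_sub h1 h2
    have := Nat.le_of_dvd hr0 hdvd
    omega
  rcases Nat.eq_zero_or_pos t' with ht0 | ht0
  · -- t' = 0 : pq = r' + s'p ⇒ p ∣ r' ⇒ p ≤ r' ≤ M < p
    rw [ht0] at hkey
    simp only [Nat.zero_mul, Nat.add_zero] at hkey
    have hdvd : p ∣ r' := by
      have h1 : p ∣ p * q := dvd_mul_right p q
      have h2 : p ∣ s' * p := dvd_mul_left p s'
      have h3 : r' = p * q - s' * p := by omega
      rw [h3]; exact Nat.dvd_sub h1 h2
    have := Nat.le_of_dvd hr0 hdvd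
    omega
  exact hrep r' s' t' hr0 hr'M hs0 hs'M ht0 ht'M hkey
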